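/- arXiv:2001.01708 — 6 statements merged into one kernel-verified Lean document; each statement's English description precedes it below -/
import Mathlib

section
/- Concavity of the impurity along a line segment: let p, δ : Fin N → ℝ be such that for every t ∈ [0,1] the vector p + t•δ is componentwise nonnegative and has ∑ n, (p n + t·δ n) > 0. Then the function t ↦ F(p + t•δ) is concave on [0,1]. -/
def simplex (N : ℕ) : Set (Fin N → ℝ) := {q | (∀ n, 0 ≤ q n) ∧ ∑ n, q n = 1}

/-- `f` is concave on the standard probability simplex. -/
def ConcaveOnSimplex {N : ℕ} (f : (Fin N → ℝ) → ℝ) : Prop :=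
  ∀ a ∈ simplex N, ∀ b ∈ simplex N, ∀ lam : ℝ, lam ∈ Set.Icc (0:ℝ) 1 →
    lam * f a + (1 - lam) * f b ≤ f (lam • a + (1 - lam) • b)

/-- The impurity functional `F(v) = (∑ n, v n) * f (v / ∑ n, v n)`. -/
noncomputable def impurity {N : ℕ} (f : (Fin N → ℝ) → ℝ) (v : Fin N → ℝ) : ℝ :=
  (∑ n, v n) * f (fun n => v n / ∑ m, v m)

/-! The impurity is the perspective `(s, q) ↦ s f(q)` of `f`, read in the coordinates `v = s q`;
the perspective of a concave function is concave, and concavity survives restriction to a line. -/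

theorem ConcaveOn.comp_lineSegment {E : Type*} [AddCommGroup E] [Module ℝ E] {s : Set E}
    {F : E → ℝ} (hF : ConcaveOn ℝ s F) {p δ : E} (hmem : ∀ t ∈ Set.Icc (0:ℝ) 1, p + t • δ ∈ s) :
    ConcaveOn ℝ (Set.Icc (0:ℝ) 1) (fun t : ℝ => F (p + t • δ)) := by
  have hline : ∀ t : ℝ, AffineMap.lineMap p (p + δ) t = p + t • δ := fun t => by
    simp [AffineMap.lineMap_apply, add_comm]
  have := (hF.comp_affineMap (AffineMap.lineMap p (p + δ))).subset
    (fun t ht => by simpa [hline] using hmem t ht) (convex_Icc 0 1)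
  simpa [Function.comp_def, hline] using this

theorem simplex_eq_stdSimplex (N : ℕ) : simplex N = stdSimplex ℝ (Fin N) := rfl

theorem ConcaveOnSimplex.concaveOn {N : ℕ} {f : (Fin N → ℝ) → ℝ} (hf : ConcaveOnSimplex f) :
    ConcaveOn ℝ (simplex N) f := by
  refine ⟨simplex_eq_stdSimplex N ▸ convex_stdSimplex ℝ (Fin N), ?_⟩
  intro a ha b hb μ ν hμ hν hμν
  obtain rfl : ν = 1 - μ := by linarith
  exact hf a ha b hb μ ⟨hμ, by linarith⟩

def impurityDomain (N : ℕ) : Set (Fin N → ℝ) := {v | (∀ n, 0 ≤ v n) ∧ 0 < ∑ n, v n}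

theorem convex_impurityDomain (N : ℕ) : Convex ℝ (impurityDomain N) := by
  intro u hu v hv a b ha hb hab
  refine ⟨fun n => ?_, ?_⟩
  · simpa using add_nonneg (mul_nonneg ha (hu.1 n)) (mul_nonneg hb (hv.1 n))
  · simp only [Pi.add_apply, Pi.smul_apply, smul_eq_mul, Finset.sum_add_distrib, ← Finset.mul_sum]
    obtain rfl | ha' := ha.eq_or_lt
    · simpa [show b = 1 by linarith] using hv.2
    · exact add_pos_of_pos_of_nonneg (mul_pos ha' hu.2) (mul_nonneg hb hv.2.le)

theorem normalize_mem_simplex {N : ℕ} {v : Fin N → ℝ} (hv : v ∈ impurityDomain N) :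
    (fun n => v n / ∑ m, v m) ∈ simplex N :=
  ⟨fun n => div_nonneg (hv.1 n) hv.2.le, by rw [← Finset.sum_div, div_self hv.2.ne']⟩

theorem concaveOn_impurity {N : ℕ} {f : (Fin N → ℝ) → ℝ} (hf : ConcaveOnSimplex f) :
    ConcaveOn ℝ (impurityDomain N) (impurity f) := by
  refine ⟨convex_impurityDomain N, ?_⟩
  intro u hu v hv a b ha hb hab
  set su := ∑ n, u n
  set sv := ∑ n, v n
  set qu : Fin N → ℝ := fun n => u n / su
  set qv : Fin N → ℝ := fun n => v n / sv
  have hsum : ∑ n, (a • u + b • v) n = a * su + b * sv := by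
    simp [Finset.sum_add_distrib, ← Finset.mul_sum, su, sv]
  have hs : 0 < a * su + b * sv := hsum ▸ (convex_impurityDomain N hu hv ha hb hab).2
  have hmix : (fun n => (a • u + b • v) n / ∑ m, (a • u + b • v) m)
      = (a * su / (a * su + b * sv)) • qu + (b * sv / (a * su + b * sv)) • qv := by
    funext n
    rw [hsum]
    simp only [Pi.add_apply, Pi.smul_apply, smul_eq_mul, qu, qv]
    have hsu : su ≠ 0 := hu.2.ne'
    have hsv : sv ≠ 0 := hv.2.ne'
    field_simp
  have hconc := hf.concaveOn.2 (normalize_mem_simplex hu) (normalize_mem_simplex hv)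
    (div_nonneg (mul_nonneg ha hu.2.le) hs.le) (div_nonneg (mul_nonneg hb hv.2.le) hs.le)
    (by rw [← add_div, div_self hs.ne'])
  simp only [impurity, smul_eq_mul]
  rw [hmix, hsum]
  calc a * (su * f qu) + b * (sv * f qv)
      = (a * su + b * sv) * ((a * su / (a * su + b * sv)) * f qu
          + (b * sv / (a * su + b * sv)) * f qv) := by field_simp
    _ ≤ (a * su + b * sv) * f ((a * su / (a * su + b * sv)) • qu
          + (b * sv / (a * su + b * sv)) • qv) := mul_le_mul_of_nonneg_left hconc hs.le

theorem stmt_3_general {N : ℕ} (f : (Fin N → ℝ) → ℝ) (hf : ConcaveOnSimplex f)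
    (p δ : Fin N → ℝ)
    (hpos : ∀ t ∈ Set.Icc (0:ℝ) 1,
      (∀ n, 0 ≤ p n + t * δ n) ∧ 0 < ∑ n, (p n + t * δ n)) :
    ConcaveOn ℝ (Set.Icc (0:ℝ) 1) (fun t : ℝ => impurity f (p + t • δ)) :=
  (concaveOn_impurity hf).comp_lineSegment fun t ht => by simpa [impurityDomain] using hpos t ht

/-- Concavity of the impurity along a line segment. -/
theorem stmt_3 {N : ℕ} (hN : 1 ≤ N) (f : (Fin N → ℝ) → ℝ) (hf : ConcaveOnSimplex f)
    (p δ : Fin N → ℝ)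
    (hpos : ∀ t ∈ Set.Icc (0:ℝ) 1,
      (∀ n, 0 ≤ p n + t * δ n) ∧ 0 < ∑ n, (p n + t * δ n)) :
    ConcaveOn ℝ (Set.Icc (0:ℝ) 1) (fun t : ℝ => impurity f (p + t • δ)) :=
  stmt_3_general f hf p δ hpos
end

section
/- Proposition 2 (slope inequality for the perturbed objective): let β > 0, let H ≥ 1, and for each h ∈ Fin H let p_h, δ_h : Fin N → ℝ be such that for every t ∈ [0,1] the vector p_h + t•δ_h is componentwise nonnegative with positive coordinate sum. Let g_q, g_s : ℝ → ℝ be concave, and let z_q, z_s, w be reals with w ≥ 0. Define I(t) = β · ∑_{h} F(p_h + t•δ_h) + g_q(z_q − t·w) + g_s(z_s + t·w) for t ∈ [0,1]. Then for all 0 < t < a ≤ 1, (I(t) − I(0))/t ≥ (I(a) − I(0))/a. -/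
lemma impurity_concave {N : ℕ} (f : (Fin N → ℝ) → ℝ) (hf : ConcaveOnSimplex f)
    (v u : Fin N → ℝ) (hv0 : ∀ n, 0 ≤ v n) (hvs : 0 < ∑ n, v n)
    (hu0 : ∀ n, 0 ≤ u n) (hus : 0 < ∑ n, u n)
    (lam : ℝ) (hl0 : 0 ≤ lam) (hl1 : lam ≤ 1) :
    lam * impurity f v + (1 - lam) * impurity f u ≤ impurity f (lam • v + (1 - lam) • u) := by
  set s := ∑ n, v n with hs
  set r := ∑ n, u n with hr
  clear_value s r
  have hsum : ∑ n, (lam • v + (1 - lam) • u) n = lam * s + (1 - lam) * r := by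
    simp [Finset.sum_add_distrib, Finset.mul_sum, hs, hr]
  set S := lam * s + (1 - lam) * r with hS
  clear_value S
  have hm : 0 < min s r := lt_min hvs hus
  have h1 : 0 ≤ lam * (s - min s r) := mul_nonneg hl0 (sub_nonneg.2 (min_le_left s r))
  have h2 : 0 ≤ (1 - lam) * (r - min s r) := mul_nonneg (by linarith) (sub_nonneg.2 (min_le_right s r))
  have hSpos : 0 < S := by nlinarith
  set μ := lam * s / S with hmu
  clear_value μ
  have hμ0 : 0 ≤ μ := by
    rw [hmu]; exact div_nonneg (mul_nonneg hl0 hvs.le) hSpos.le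
  have hμ1 : μ ≤ 1 := by
    rw [hmu, div_le_one hSpos]; nlinarith [mul_nonneg (by linarith : (0:ℝ) ≤ 1 - lam) hus.le]
  have h1μ : 1 - μ = (1 - lam) * r / S := by
    rw [hmu, eq_div_iff hSpos.ne', sub_mul, div_mul_cancel₀ _ hSpos.ne']; linarith
  have hva : (fun n => v n / s) ∈ simplex N :=
    ⟨fun n => div_nonneg (hv0 n) hvs.le, by rw [← Finset.sum_div, ← hs]; field_simp⟩
  have hub : (fun n => u n / r) ∈ simplex N :=
    ⟨fun n => div_nonneg (hu0 n) hus.le, by rw [← Finset.sum_div, ← hr]; field_simp⟩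
  have key := hf _ hva _ hub μ ⟨hμ0, hμ1⟩
  have heq : (fun n => (lam • v + (1 - lam) • u) n / ∑ m, (lam • v + (1 - lam) • u) m)
      = μ • (fun n => v n / s) + (1 - μ) • (fun n => u n / r) := by
    funext n
    rw [hsum]
    simp only [Pi.add_apply, Pi.smul_apply, smul_eq_mul]
    rw [h1μ, hmu]
    field_simp
  have hval : impurity f (lam • v + (1 - lam) • u)
      = S * f (μ • (fun n => v n / s) + (1 - μ) • (fun n => u n / r)) := by
    rw [impurity, heq, hsum]
  have hcomb : ∀ A B : ℝ, lam * (s * A) + (1 - lam) * (r * B) = S * (μ * A + (1 - μ) * B) := by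
    intro A B
    rw [h1μ, hmu]
    field_simp
  rw [hval, impurity, impurity, ← hs, ← hr, hcomb]
  exact mul_le_mul_of_nonneg_left key hSpos.le

/-- Proposition 2: slope inequality for the perturbed objective. -/
theorem stmt_4 {N H : ℕ} (hN : 1 ≤ N) (hH : 1 ≤ H)
    (f : (Fin N → ℝ) → ℝ) (hf : ConcaveOnSimplex f)
    (β : ℝ) (hβ : 0 < β)
    (pv δ : Fin H → Fin N → ℝ)
    (hpos : ∀ h : Fin H, ∀ t ∈ Set.Icc (0:ℝ) 1,
      (∀ n, 0 ≤ pv h n + t * δ h n) ∧ 0 < ∑ n, (pv h n + t * δ h n))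
    (gq gs : ℝ → ℝ) (hgq : ConcaveOn ℝ Set.univ gq) (hgs : ConcaveOn ℝ Set.univ gs)
    (zq zs w : ℝ) (hw : 0 ≤ w)
    (I : ℝ → ℝ)
    (hI : ∀ t : ℝ, I t = β * ∑ h, impurity f (pv h + t • δ h)
        + gq (zq - t * w) + gs (zs + t * w)) :
    ∀ t a : ℝ, 0 < t → t < a → a ≤ 1 → (I a - I 0) / a ≤ (I t - I 0) / t := by
  intro t a ht hta ha1
  have ha0 : 0 < a := ht.trans hta
  set lam := t / a with hlam
  have hl0 : 0 ≤ lam := div_nonneg ht.le ha0.le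
  have hl1 : lam ≤ 1 := by rw [hlam, div_le_one ha0]; linarith
  have hla : lam * a = t := div_mul_cancel₀ t ha0.ne'
  -- concavity of each impurity term
  have himp : ∀ h : Fin H,
      lam * impurity f (pv h + a • δ h) + (1 - lam) * impurity f (pv h + (0:ℝ) • δ h)
        ≤ impurity f (pv h + t • δ h) := by
    intro h
    have hva := hpos h a ⟨ha0.le, ha1⟩
    have hvb := hpos h 0 ⟨le_refl 0, zero_le_one⟩
    have hmix : pv h + t • δ h
        = lam • (pv h + a • δ h) + (1 - lam) • (pv h + (0:ℝ) • δ h) := by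
      funext n
      simp only [Pi.add_apply, Pi.smul_apply, smul_eq_mul]
      rw [← hla]; ring
    rw [hmix]
    exact impurity_concave f hf _ _
      (fun n => by simpa using hva.1 n) (by simpa using hva.2)
      (fun n => by simpa using hvb.1 n) (by simpa using hvb.2) lam hl0 hl1
  have hsum : lam * ∑ h, impurity f (pv h + a • δ h)
      + (1 - lam) * ∑ h, impurity f (pv h + (0:ℝ) • δ h)
      ≤ ∑ h, impurity f (pv h + t • δ h) := by
    rw [Finset.mul_sum, Finset.mul_sum, ← Finset.sum_add_distrib]
    exact Finset.sum_le_sum fun h _ => himp h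
  have hgq' : lam * gq (zq - a * w) + (1 - lam) * gq (zq - 0 * w) ≤ gq (zq - t * w) := by
    have := hgq.2 (Set.mem_univ (zq - a * w)) (Set.mem_univ (zq - 0 * w)) hl0
      (by linarith : (0:ℝ) ≤ 1 - lam) (by ring)
    simpa [smul_eq_mul, show lam * (zq - a * w) + (1 - lam) * zq = zq - t * w by
      rw [← hla]; ring] using this
  have hgs' : lam * gs (zs + a * w) + (1 - lam) * gs (zs + 0 * w) ≤ gs (zs + t * w) := by
    have := hgs.2 (Set.mem_univ (zs + a * w)) (Set.mem_univ (zs + 0 * w)) hl0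
      (by linarith : (0:ℝ) ≤ 1 - lam) (by ring)
    simpa [smul_eq_mul, show lam * (zs + a * w) + (1 - lam) * zs = zs + t * w by
      rw [← hla]; ring] using this
  have hcomb : lam * I a + (1 - lam) * I 0 ≤ I t := by
    rw [hI a, hI 0, hI t]
    nlinarith [mul_le_mul_of_nonneg_left hsum hβ.le]
  rw [div_le_div_iff₀ ha0 ht]
  have h3 := mul_le_mul_of_nonneg_left hcomb ha0.le
  have h4 : a * (lam * I a + (1 - lam) * I 0) = t * I a + (a - t) * I 0 := by
    rw [← hla]; ring
  rw [h4] at h3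
  nlinarith [h3]
end

section
/- Derivative of the objective under mass transfer: fix a row m, clusters q ≠ s, and 0 < v ≤ 1. Suppose the impurity functional F is (Fréchet) differentiable at each p_{XT}(·,h) with partial derivatives c_h^n = ∂F/∂v_n evaluated at p_{XT}(·,h), and each g_k is differentiable at p_Z(k) with d_k = g_k'(p_Z(k)). Define I(t) = β · ∑_h F(p_{XT}(·,h) + t·v·(A q → s shift)_h) + g_q(p_Z(q) − t·v·p_{Y_m}) + g_s(p_Z(s) + t·v·p_{Y_m}), where the shift vector at output h is (fun n => v·(p n m)·(A s h − A q h)) scaled by t. Then I is differentiable at t = 0 and I'(0) = v·(D(m,s) − D(m,q)), where D(m,k) = β · ∑_h ∑_n c_h^n · (p n m) · A k h + d_k · p_{Y_m}. -/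
/-- A joint distribution on `Fin N × Fin M`. -/
def IsJointDist {N M : ℕ} (p : Fin N → Fin M → ℝ) : Prop :=
  (∀ n m, 0 ≤ p n m) ∧ ∑ n, ∑ m, p n m = 1

/-- A row-stochastic matrix. -/
def RowStochastic {M K : ℕ} (Q : Fin M → Fin K → ℝ) : Prop :=
  (∀ m k, 0 ≤ Q m k) ∧ ∀ m, ∑ k, Q m k = 1

/-- Marginal of the data `Y`: `p_{Y_m} = ∑ n, p n m`. -/
noncomputable def pY {N M : ℕ} (p : Fin N → Fin M → ℝ) (m : Fin M) : ℝ := ∑ n, p n m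

/-- Joint distribution of the source and the quantizer output. -/
noncomputable def pXZ {N M K : ℕ} (p : Fin N → Fin M → ℝ) (Q : Fin M → Fin K → ℝ)
    (n : Fin N) (k : Fin K) : ℝ := ∑ m, p n m * Q m k

/-- Marginal of the quantizer output. -/
noncomputable def pZ {N M K : ℕ} (p : Fin N → Fin M → ℝ) (Q : Fin M → Fin K → ℝ)
    (k : Fin K) : ℝ := ∑ n, pXZ p Q n k

/-- Joint distribution of the source and the channel output. -/
noncomputable def pXT {N M K H : ℕ} (p : Fin N → Fin M → ℝ) (Q : Fin M → Fin K → ℝ)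
    (A : Fin K → Fin H → ℝ) (n : Fin N) (h : Fin H) : ℝ := ∑ k, pXZ p Q n k * A k h

/-- The objective `J(Q) = β ∑_h F(p_{XT}(·,h)) + ∑_k g_k(p_Z(k))`. -/
noncomputable def J {N M K H : ℕ} (β : ℝ) (f : (Fin N → ℝ) → ℝ) (g : Fin K → ℝ → ℝ)
    (p : Fin N → Fin M → ℝ) (A : Fin K → Fin H → ℝ) (Q : Fin M → Fin K → ℝ) : ℝ :=
  β * ∑ h, impurity f (fun n => pXT p Q A n h) + ∑ k, g k (pZ p Q k)

/-- A deterministic (hard) quantizer. -/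
def Deterministic {M K : ℕ} (Q : Fin M → Fin K → ℝ) : Prop :=
  ∀ m, ∃ k, Q m k = 1 ∧ ∀ k', k' ≠ k → Q m k' = 0

lemma ContinuousLinearMap.apply_eq_sum_mul_single {ι : Type*} [Fintype ι] [DecidableEq ι]
    (L : (ι → ℝ) →L[ℝ] ℝ) (w : ι → ℝ) : L w = ∑ i, w i * L (Pi.single i 1) := by
  conv_lhs => rw [pi_eq_sum_univ' w, map_sum]
  simp only [map_smul, smul_eq_mul]

lemma HasFDerivAt.hasDerivAt_add_mul_pi {ι : Type*} [Fintype ι] [DecidableEq ι]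
    {F : (ι → ℝ) → ℝ} {L : (ι → ℝ) →L[ℝ] ℝ} {x : ι → ℝ} (hF : HasFDerivAt F L x) (w : ι → ℝ) :
    HasDerivAt (fun t : ℝ => F (fun i => x i + t * w i)) (∑ i, w i * L (Pi.single i 1)) 0 := by
  rw [← L.apply_eq_sum_mul_single]
  exact hF.hasLineDerivAt w

lemma HasDerivAt.hasDerivAt_add_mul {g : ℝ → ℝ} {d a : ℝ} (hg : HasDerivAt g d a) (b : ℝ) :
    HasDerivAt (fun t : ℝ => g (a + t * b)) (d * b) 0 := by
  simpa [HasLineDerivAt, mul_comm] using hg.hasFDerivAt.hasLineDerivAt b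

theorem stmt_5_general {N M K H : ℕ}
    (β : ℝ)
    (p : Fin N → Fin M → ℝ)
    (Q : Fin M → Fin K → ℝ)
    (A : Fin K → Fin H → ℝ)
    (f : (Fin N → ℝ) → ℝ)
    (g : Fin K → ℝ → ℝ)
    (m : Fin M) (q s : Fin K)
    (v : ℝ)
    (Dh : Fin H → ((Fin N → ℝ) →L[ℝ] ℝ))
    (hFd : ∀ h, HasFDerivAt (impurity f) (Dh h) (fun n => pXT p Q A n h))
    (c : Fin H → Fin N → ℝ) (hc : ∀ h n, Dh h (Pi.single n 1) = c h n)
    (d : Fin K → ℝ) (hgd : ∀ k, HasDerivAt (g k) (d k) (pZ p Q k)) :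
    HasDerivAt (fun t : ℝ =>
        β * ∑ h, impurity f (fun n => pXT p Q A n h + t * (v * p n m * (A s h - A q h)))
          + g q (pZ p Q q - t * (v * pY p m)) + g s (pZ p Q s + t * (v * pY p m)))
      (v * ((β * ∑ h, ∑ n, c h n * p n m * A s h + d s * pY p m)
          - (β * ∑ h, ∑ n, c h n * p n m * A q h + d q * pY p m))) 0 := by
  have hF : ∀ h, HasDerivAt
      (fun t : ℝ => impurity f (fun n => pXT p Q A n h + t * (v * p n m * (A s h - A q h))))
      (∑ n, v * p n m * (A s h - A q h) * c h n) 0 := fun h => by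
    simpa only [hc] using (hFd h).hasDerivAt_add_mul_pi _
  have hgq : HasDerivAt (fun t : ℝ => g q (pZ p Q q - t * (v * pY p m)))
      (d q * -(v * pY p m)) 0 := by
    simpa only [mul_neg, ← sub_eq_add_neg] using (hgd q).hasDerivAt_add_mul (-(v * pY p m))
  have hShift : ∑ h, ∑ n, v * p n m * (A s h - A q h) * c h n
      = v * (∑ h, ∑ n, c h n * p n m * A s h) - v * ∑ h, ∑ n, c h n * p n m * A q h := by
    simp only [Finset.mul_sum, ← Finset.sum_sub_distrib]
    exact Finset.sum_congr rfl fun h _ => Finset.sum_congr rfl fun n _ => by ring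
  refine ((((HasDerivAt.fun_sum fun h _ => hF h).const_mul β).add hgq).add
    ((hgd s).hasDerivAt_add_mul (v * pY p m))).congr_deriv ?_
  rw [hShift]
  ring

/-- Derivative of the objective under mass transfer. -/
theorem stmt_5 {N M K H : ℕ}
    (β : ℝ) (hβ : 0 < β)
    (p : Fin N → Fin M → ℝ) (hp : IsJointDist p)
    (Q : Fin M → Fin K → ℝ) (hQ : RowStochastic Q)
    (A : Fin K → Fin H → ℝ) (hA : RowStochastic A)
    (f : (Fin N → ℝ) → ℝ) (hf : ConcaveOnSimplex f)
    (g : Fin K → ℝ → ℝ) (hg : ∀ k, ConcaveOn ℝ Set.univ (g k))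
    (m : Fin M) (q s : Fin K) (hqs : q ≠ s)
    (v : ℝ) (hv : 0 < v) (hv1 : v ≤ 1)
    (Dh : Fin H → ((Fin N → ℝ) →L[ℝ] ℝ))
    (hFd : ∀ h, HasFDerivAt (impurity f) (Dh h) (fun n => pXT p Q A n h))
    (c : Fin H → Fin N → ℝ) (hc : ∀ h n, Dh h (Pi.single n 1) = c h n)
    (d : Fin K → ℝ) (hgd : ∀ k, HasDerivAt (g k) (d k) (pZ p Q k)) :
    HasDerivAt (fun t : ℝ =>
        β * ∑ h, impurity f (fun n => pXT p Q A n h + t * (v * p n m * (A s h - A q h)))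
          + g q (pZ p Q q - t * (v * pY p m)) + g s (pZ p Q s + t * (v * pY p m)))
      (v * ((β * ∑ h, ∑ n, c h n * p n m * A s h + d s * pY p m)
          - (β * ∑ h, ∑ n, c h n * p n m * A q h + d q * pY p m))) 0 :=
  stmt_5_general β p Q A f g m q s v Dh hFd c hc d hgd
end

section
/- Theorem 1 (necessary optimality condition): suppose Q* is a row-stochastic quantizer minimizing J over all row-stochastic matrices Q : Fin M → Fin K → ℝ. Assume that at Q* each vector p_{XT}(·,h) has positive coordinate sum, F is differentiable at each p_{XT}(·,h) with partial derivatives c_h^n, and each g_k is differentiable at p_Z(k) with d_k = g_k'(p_Z(k)). Define D(m,k) = β · ∑_h ∑_n c_h^n · (p n m) · A k h + d_k · p_{Y_m}. Then for every m ∈ Fin M and every q, s ∈ Fin K: if Q* m q > 0, then D(m,q) ≤ D(m,s). -/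
/-!
Moving mass `t` from column `q` to column `s` in row `m` of `Q*` keeps the quantizer
row-stochastic for `0 ≤ t ≤ Q* m q`, and all induced distributions depend linearly on the
quantizer. So `t ↦ J (Q* + t • rowTransfer m q s)` is minimal at `t = 0` on an interval to the
right of `0`, and its derivative there, which the chain rule evaluates to `D(m,s) - D(m,q)`, is
nonnegative.
-/

open Set

theorem IsMinOn.nonneg_of_hasDerivAt_add_smul {E : Type*} [AddCommGroup E] [Module ℝ E]
    {F : E → ℝ} {S : Set E} {x y : E} {δ φ' : ℝ} (hS : Convex ℝ S) (hmin : IsMinOn F S x)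
    (hx : x ∈ S) (hδ : 0 < δ) (hxy : x + δ • y ∈ S)
    (hφ : HasDerivAt (fun t : ℝ => F (x + t • y)) φ' 0) : 0 ≤ φ' := by
  have hline : ∀ t ∈ Icc 0 δ, x + t • y ∈ S := by
    intro t ht
    have := hS.add_smul_mem hx (y := δ • y) (by simpa using hxy)
      ⟨div_nonneg ht.1 hδ.le, (div_le_one hδ).2 ht.2⟩
    rwa [smul_smul, div_mul_cancel₀ _ hδ.ne'] at this
  have hloc : IsLocalMinOn (fun t : ℝ => F (x + t • y)) (Icc 0 δ) 0 :=
    IsMinOn.localize fun t ht => by simpa using hmin (hline t ht)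
  have hcone : δ ∈ posTangentConeAt (Icc 0 δ) (0 : ℝ) :=
    mem_posTangentConeAt_of_segment_subset (by simp [segment_eq_Icc hδ.le])
  have := hloc.hasFDerivWithinAt_nonneg hφ.hasFDerivAt.hasFDerivWithinAt hcone
  rw [ContinuousLinearMap.toSpanSingleton_apply, smul_eq_mul] at this
  exact (mul_nonneg_iff_of_pos_left hδ).1 this

theorem ContinuousLinearMap.apply_eq_sum_apply_single_mul {ι : Type*} [Fintype ι] [DecidableEq ι]
    (L : (ι → ℝ) →L[ℝ] ℝ) (w : ι → ℝ) : L w = ∑ i, L (Pi.single i 1) * w i := by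
  conv_lhs => rw [← Finset.univ_sum_single w]
  rw [map_sum]
  refine Finset.sum_congr rfl fun i _ => ?_
  rw [mul_comm, ← smul_eq_mul, ← map_smul, ← Pi.single_smul', smul_eq_mul, mul_one]

section Quantizer

variable {N M K H : ℕ} (p : Fin N → Fin M → ℝ)

theorem pXZ_add_smul (Q Y : Fin M → Fin K → ℝ) (t : ℝ) (n : Fin N) (k : Fin K) :
    pXZ p (Q + t • Y) n k = pXZ p Q n k + t * pXZ p Y n k := by
  simp only [pXZ, Pi.add_apply, Pi.smul_apply, smul_eq_mul, Finset.mul_sum,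
    ← Finset.sum_add_distrib]
  exact Finset.sum_congr rfl fun _ _ => by ring

theorem pZ_add_smul (Q Y : Fin M → Fin K → ℝ) (t : ℝ) (k : Fin K) :
    pZ p (Q + t • Y) k = pZ p Q k + t * pZ p Y k := by
  simp only [pZ, pXZ_add_smul, Finset.sum_add_distrib, Finset.mul_sum]

theorem pXT_add_smul (Q Y : Fin M → Fin K → ℝ) (A : Fin K → Fin H → ℝ) (t : ℝ) (n : Fin N)
    (h : Fin H) : pXT p (Q + t • Y) A n h = pXT p Q A n h + t * pXT p Y A n h := by
  simp only [pXT, pXZ_add_smul, add_mul, Finset.sum_add_distrib, Finset.mul_sum, mul_assoc]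

theorem hasDerivAt_J_add_smul (β : ℝ) (f : (Fin N → ℝ) → ℝ) (g : Fin K → ℝ → ℝ)
    (A : Fin K → Fin H → ℝ) (Q Y : Fin M → Fin K → ℝ) (Dh : Fin H → ((Fin N → ℝ) →L[ℝ] ℝ))
    (hFd : ∀ h, HasFDerivAt (impurity f) (Dh h) (fun n => pXT p Q A n h))
    (d : Fin K → ℝ) (hgd : ∀ k, HasDerivAt (g k) (d k) (pZ p Q k)) :
    HasDerivAt (fun t : ℝ => J β f g p A (Q + t • Y))
      (β * ∑ h, Dh h (fun n => pXT p Y A n h) + ∑ k, d k * pZ p Y k) 0 := by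
  simp only [J, pXT_add_smul, pZ_add_smul]
  have hF : ∀ h, HasDerivAt
      (fun t : ℝ => impurity f (fun n => pXT p Q A n h + t * pXT p Y A n h))
      (Dh h (fun n => pXT p Y A n h)) 0 := by
    intro h
    have hline : HasDerivAt (fun t : ℝ => fun n => pXT p Q A n h + t * pXT p Y A n h)
        (fun n => pXT p Y A n h) 0 :=
      hasDerivAt_pi.2 fun n => (hasDerivAt_mul_const _).const_add _
    exact (hFd h).comp_hasDerivAt_of_eq 0 hline (by simp)
  have hg : ∀ k, HasDerivAt (fun t : ℝ => g k (pZ p Q k + t * pZ p Y k)) (d k * pZ p Y k) 0 :=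
    fun k => (hgd k).comp_of_eq 0 ((hasDerivAt_mul_const _).const_add _) (by simp)
  exact ((HasDerivAt.fun_sum fun h _ => hF h).const_mul β).add
    (HasDerivAt.fun_sum fun k _ => hg k)


theorem convex_rowStochastic : Convex ℝ {Q : Fin M → Fin K → ℝ | RowStochastic Q} := by
  rintro Q ⟨hQ_nonneg, hQ_sum⟩ Q' ⟨hQ'_nonneg, hQ'_sum⟩ a b ha hb hab
  refine ⟨fun m k => ?_, fun m => ?_⟩
  · simp only [Pi.add_apply, Pi.smul_apply, smul_eq_mul]
    exact add_nonneg (mul_nonneg ha (hQ_nonneg m k)) (mul_nonneg hb (hQ'_nonneg m k))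
  · simp [Finset.sum_add_distrib, ← Finset.mul_sum, hQ_sum, hQ'_sum, hab]

def rowTransfer (m : Fin M) (q s : Fin K) : Fin M → Fin K → ℝ :=
  fun m' k => if m' = m then (if k = s then 1 else 0) - (if k = q then 1 else 0) else 0

theorem RowStochastic.add_smul_rowTransfer {Q : Fin M → Fin K → ℝ}
    (hQ : RowStochastic Q) (m : Fin M) (q s : Fin K) :
    RowStochastic (Q + Q m q • rowTransfer m q s) := by
  refine ⟨fun m' k => ?_, fun m' => ?_⟩
  · by_cases hm : m' = m
    · subst hm
      by_cases hk : k = q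
      · subst hk
        by_cases hs : k = s <;> simp [rowTransfer, hs, hQ.1]
      · by_cases hs : k = s
        · subst hs
          simpa [rowTransfer, hk] using add_nonneg (hQ.1 m' k) (hQ.1 m' q)
        · simpa [rowTransfer, hs, hk] using hQ.1 m' k
    · simpa [rowTransfer, hm] using hQ.1 m' k
  · by_cases hm : m' = m <;>
      simp [rowTransfer, hm, Finset.sum_add_distrib, ← Finset.mul_sum, Finset.sum_sub_distrib, hQ.2]

theorem pXT_rowTransfer (A : Fin K → Fin H → ℝ) (m : Fin M) (q s : Fin K) (n : Fin N)
    (h : Fin H) : pXT p (rowTransfer m q s) A n h = p n m * (A s h - A q h) := by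
  simp [pXT, pXZ, rowTransfer, mul_sub, sub_mul, Finset.sum_sub_distrib]

theorem pZ_rowTransfer (m : Fin M) (q s k : Fin K) :
    pZ p (rowTransfer m q s) k =
      pY p m * ((if k = s then 1 else 0) - (if k = q then 1 else 0)) := by
  simp [pZ, pXZ, pY, rowTransfer, Finset.sum_mul]

end Quantizer

theorem stmt_6_general {N M K H : ℕ}
    (β : ℝ)
    (p : Fin N → Fin M → ℝ)
    (A : Fin K → Fin H → ℝ)
    (f : (Fin N → ℝ) → ℝ)
    (g : Fin K → ℝ → ℝ)
    (Qstar : Fin M → Fin K → ℝ) (hQstar : RowStochastic Qstar)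
    (hmin : ∀ Q : Fin M → Fin K → ℝ, RowStochastic Q → J β f g p A Qstar ≤ J β f g p A Q)
    (Dh : Fin H → ((Fin N → ℝ) →L[ℝ] ℝ))
    (hFd : ∀ h, HasFDerivAt (impurity f) (Dh h) (fun n => pXT p Qstar A n h))
    (c : Fin H → Fin N → ℝ) (hc : ∀ h n, Dh h (Pi.single n 1) = c h n)
    (d : Fin K → ℝ) (hgd : ∀ k, HasDerivAt (g k) (d k) (pZ p Qstar k)) :
    ∀ (m : Fin M) (q s : Fin K), 0 < Qstar m q →
      β * ∑ h, ∑ n, c h n * p n m * A q h + d q * pY p m ≤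
      β * ∑ h, ∑ n, c h n * p n m * A s h + d s * pY p m := by
  intro m q s hq
  have hslope := IsMinOn.nonneg_of_hasDerivAt_add_smul convex_rowStochastic
    (fun Q hQ => hmin Q hQ) hQstar hq (hQstar.add_smul_rowTransfer m q s)
    (hasDerivAt_J_add_smul p β f g A Qstar (rowTransfer m q s) Dh hFd d hgd)
  simp only [pXT_rowTransfer, pZ_rowTransfer, ContinuousLinearMap.apply_eq_sum_apply_single_mul,
    hc, mul_sub, ← mul_assoc, Finset.sum_sub_distrib, mul_ite, mul_one, mul_zero,
    Finset.sum_ite_eq', Finset.mem_univ, if_true] at hslope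
  linarith

/-- Theorem 1: necessary optimality condition for the optimal quantizer. -/
theorem stmt_6 {N M K H : ℕ}
    (β : ℝ) (hβ : 0 < β)
    (p : Fin N → Fin M → ℝ) (hp : IsJointDist p)
    (A : Fin K → Fin H → ℝ) (hA : RowStochastic A)
    (f : (Fin N → ℝ) → ℝ) (hf : ConcaveOnSimplex f)
    (g : Fin K → ℝ → ℝ) (hg : ∀ k, ConcaveOn ℝ Set.univ (g k))
    (Qstar : Fin M → Fin K → ℝ) (hQstar : RowStochastic Qstar)
    (hmin : ∀ Q : Fin M → Fin K → ℝ, RowStochastic Q → J β f g p A Qstar ≤ J β f g p A Q)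
    (hpos : ∀ h, 0 < ∑ n, pXT p Qstar A n h)
    (Dh : Fin H → ((Fin N → ℝ) →L[ℝ] ℝ))
    (hFd : ∀ h, HasFDerivAt (impurity f) (Dh h) (fun n => pXT p Qstar A n h))
    (c : Fin H → Fin N → ℝ) (hc : ∀ h n, Dh h (Pi.single n 1) = c h n)
    (d : Fin K → ℝ) (hgd : ∀ k, HasDerivAt (g k) (d k) (pZ p Qstar k)) :
    ∀ (m : Fin M) (q s : Fin K), 0 < Qstar m q →
      β * ∑ h, ∑ n, c h n * p n m * A q h + d q * pY p m ≤
      β * ∑ h, ∑ n, c h n * p n m * A s h + d s * pY p m :=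
  stmt_6_general β p A f g Qstar hQstar hmin Dh hFd c hc d hgd
end

section
/- Concavity of the objective in the quantizer: suppose every entry of the channel matrix A is strictly positive (so that p_{XT}(·,h) has positive coordinate sum for every row-stochastic Q). Then J is concave on the convex set of row-stochastic matrices: for any row-stochastic Q₁, Q₂ : Fin M → Fin K → ℝ and λ ∈ [0,1], J(λ•Q₁ + (1−λ)•Q₂) ≥ λ·J(Q₁) + (1−λ)·J(Q₂). -/
/-- Auxiliary: the impurity functional satisfies the concavity-type inequality. -/
lemma aux_impurity {N : ℕ} (f : (Fin N → ℝ) → ℝ) (hf : ConcaveOnSimplex f)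
    (v₁ v₂ : Fin N → ℝ) (h1 : ∀ n, 0 ≤ v₁ n) (h2 : ∀ n, 0 ≤ v₂ n)
    (hs1 : 0 < ∑ n, v₁ n) (hs2 : 0 < ∑ n, v₂ n)
    (lam : ℝ) (hl0 : 0 ≤ lam) (hl1 : lam ≤ 1) :
    lam * impurity f v₁ + (1 - lam) * impurity f v₂ ≤
      impurity f (fun n => lam * v₁ n + (1 - lam) * v₂ n) := by
  set s₁ := ∑ n, v₁ n with hs₁
  set s₂ := ∑ n, v₂ n with hs₂
  have hsum : ∑ n, (lam * v₁ n + (1 - lam) * v₂ n) = lam * s₁ + (1 - lam) * s₂ := by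
    rw [Finset.sum_add_distrib, ← Finset.mul_sum, ← Finset.mul_sum]
  set s := lam * s₁ + (1 - lam) * s₂ with hs
  have hspos : 0 < s := by rw [hs]; rcases le_total s₁ s₂ with h | h <;> nlinarith
  have hs0 : s ≠ 0 := ne_of_gt hspos
  have hs10 : s₁ ≠ 0 := ne_of_gt hs1
  have hs20 : s₂ ≠ 0 := ne_of_gt hs2
  set μ := lam * s₁ / s with hμ
  have hμ0 : 0 ≤ μ := div_nonneg (mul_nonneg hl0 hs1.le) hspos.le
  have hμ1 : μ ≤ 1 := by rw [hμ, div_le_one hspos]; nlinarith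
  have ha : (fun n => v₁ n / s₁) ∈ simplex N := by
    refine ⟨fun n => div_nonneg (h1 n) hs1.le, ?_⟩
    rw [← Finset.sum_div, ← hs₁, div_self hs10]
  have hb : (fun n => v₂ n / s₂) ∈ simplex N := by
    refine ⟨fun n => div_nonneg (h2 n) hs2.le, ?_⟩
    rw [← Finset.sum_div, ← hs₂, div_self hs20]
  have key := hf _ ha _ hb μ ⟨hμ0, hμ1⟩
  have heq : (μ • (fun n => v₁ n / s₁) + (1 - μ) • (fun n => v₂ n / s₂))
      = fun n => (lam * v₁ n + (1 - lam) * v₂ n) / s := by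
    funext n
    simp only [Pi.add_apply, Pi.smul_apply, smul_eq_mul, hμ]
    field_simp
    ring
  rw [heq] at key
  have key' := mul_le_mul_of_nonneg_left key hspos.le
  have e1 : lam * s₁ = s * μ := by rw [hμ]; field_simp
  have e2 : (1 - lam) * s₂ = s * (1 - μ) := by
    have : s * (1 - μ) = s - s * μ := by ring
    rw [this, ← e1, hs]; ring
  have efin : lam * impurity f v₁ + (1 - lam) * impurity f v₂
      = s * (μ * f (fun n => v₁ n / s₁) + (1 - μ) * f (fun n => v₂ n / s₂)) := by
    unfold impurity
    rw [← hs₁, ← hs₂]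
    calc lam * (s₁ * f (fun n => v₁ n / s₁)) + (1 - lam) * (s₂ * f (fun n => v₂ n / s₂))
        = (lam * s₁) * f (fun n => v₁ n / s₁) + ((1 - lam) * s₂) * f (fun n => v₂ n / s₂) := by
          ring
      _ = (s * μ) * f (fun n => v₁ n / s₁) + (s * (1 - μ)) * f (fun n => v₂ n / s₂) := by
          rw [e1, e2]
      _ = _ := by ring
  rw [efin]
  unfold impurity
  rw [hsum]
  exact key'

lemma pXZ_lin {N M K : ℕ} (p : Fin N → Fin M → ℝ) (Q₁ Q₂ : Fin M → Fin K → ℝ)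
    (lam : ℝ) (n : Fin N) (k : Fin K) :
    pXZ p (lam • Q₁ + (1 - lam) • Q₂) n k
      = lam * pXZ p Q₁ n k + (1 - lam) * pXZ p Q₂ n k := by
  unfold pXZ
  rw [Finset.mul_sum, Finset.mul_sum, ← Finset.sum_add_distrib]
  refine Finset.sum_congr rfl fun m _ => ?_
  simp only [Pi.add_apply, Pi.smul_apply, smul_eq_mul]
  ring

lemma pZ_lin {N M K : ℕ} (p : Fin N → Fin M → ℝ) (Q₁ Q₂ : Fin M → Fin K → ℝ)
    (lam : ℝ) (k : Fin K) :
    pZ p (lam • Q₁ + (1 - lam) • Q₂) k = lam * pZ p Q₁ k + (1 - lam) * pZ p Q₂ k := by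
  unfold pZ
  rw [Finset.mul_sum, Finset.mul_sum, ← Finset.sum_add_distrib]
  exact Finset.sum_congr rfl fun n _ => pXZ_lin p Q₁ Q₂ lam n k

lemma pXT_lin {N M K H : ℕ} (p : Fin N → Fin M → ℝ) (Q₁ Q₂ : Fin M → Fin K → ℝ)
    (A : Fin K → Fin H → ℝ) (lam : ℝ) (n : Fin N) (h : Fin H) :
    pXT p (lam • Q₁ + (1 - lam) • Q₂) A n h
      = lam * pXT p Q₁ A n h + (1 - lam) * pXT p Q₂ A n h := by
  unfold pXT
  rw [Finset.mul_sum, Finset.mul_sum, ← Finset.sum_add_distrib]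
  refine Finset.sum_congr rfl fun k _ => ?_
  rw [pXZ_lin]; ring

lemma pXT_nonneg {N M K H : ℕ} (p : Fin N → Fin M → ℝ) (hp : ∀ n m, 0 ≤ p n m)
    (Q : Fin M → Fin K → ℝ) (hQ : ∀ m k, 0 ≤ Q m k)
    (A : Fin K → Fin H → ℝ) (hA : ∀ k h, 0 ≤ A k h) (n : Fin N) (h : Fin H) :
    0 ≤ pXT p Q A n h := by
  apply Finset.sum_nonneg; intro k _
  exact mul_nonneg (Finset.sum_nonneg fun m _ => mul_nonneg (hp n m) (hQ m k)) (hA k h)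

lemma sum_pZ {N M K : ℕ} (p : Fin N → Fin M → ℝ) (hp : IsJointDist p)
    (Q : Fin M → Fin K → ℝ) (hQ : RowStochastic Q) :
    ∑ k, pZ p Q k = 1 := by
  unfold pZ pXZ
  rw [Finset.sum_comm]
  calc ∑ n, ∑ k, ∑ m, p n m * Q m k
      = ∑ n, ∑ m, p n m * ∑ k, Q m k := by
        refine Finset.sum_congr rfl fun n _ => ?_
        rw [Finset.sum_comm]
        exact Finset.sum_congr rfl fun m _ => (Finset.mul_sum _ _ _).symm
    _ = ∑ n, ∑ m, p n m := by
        refine Finset.sum_congr rfl fun n _ => Finset.sum_congr rfl fun m _ => ?_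
        rw [hQ.2 m, mul_one]
    _ = 1 := hp.2

lemma sum_pXT_pos {N M K H : ℕ} (p : Fin N → Fin M → ℝ) (hp : IsJointDist p)
    (Q : Fin M → Fin K → ℝ) (hQ : RowStochastic Q)
    (A : Fin K → Fin H → ℝ) (hApos : ∀ k h, 0 < A k h) (h : Fin H) :
    0 < ∑ n, pXT p Q A n h := by
  have hswap : ∑ n, pXT p Q A n h = ∑ k, pZ p Q k * A k h := by
    unfold pXT pZ
    rw [Finset.sum_comm]
    exact Finset.sum_congr rfl fun k _ => (Finset.sum_mul _ _ _).symm
  rw [hswap]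
  have hpz : ∀ k, 0 ≤ pZ p Q k := fun k =>
    Finset.sum_nonneg fun n _ => Finset.sum_nonneg fun m _ =>
      mul_nonneg (hp.1 n m) (hQ.1 m k)
  have hex : ∃ k : Fin K, 0 < pZ p Q k := by
    by_contra hc
    push_neg at hc
    have : ∑ k, pZ p Q k ≤ 0 := Finset.sum_nonpos fun k _ => hc k
    rw [sum_pZ p hp Q hQ] at this
    linarith
  obtain ⟨k₀, hk₀⟩ := hex
  apply Finset.sum_pos' (fun k _ => mul_nonneg (hpz k) (hApos k h).le)
  exact ⟨k₀, Finset.mem_univ k₀, mul_pos hk₀ (hApos k₀ h)⟩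

/-- Concavity of the objective in the quantizer. -/
theorem stmt_8 {N M K H : ℕ}
    (β : ℝ) (hβ : 0 < β)
    (p : Fin N → Fin M → ℝ) (hp : IsJointDist p)
    (A : Fin K → Fin H → ℝ) (hA : RowStochastic A) (hApos : ∀ k h, 0 < A k h)
    (f : (Fin N → ℝ) → ℝ) (hf : ConcaveOnSimplex f)
    (g : Fin K → ℝ → ℝ) (hg : ∀ k, ConcaveOn ℝ Set.univ (g k))
    (Q₁ Q₂ : Fin M → Fin K → ℝ) (hQ₁ : RowStochastic Q₁) (hQ₂ : RowStochastic Q₂)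
    (lam : ℝ) (hlam : lam ∈ Set.Icc (0:ℝ) 1) :
    lam * J β f g p A Q₁ + (1 - lam) * J β f g p A Q₂ ≤
      J β f g p A (lam • Q₁ + (1 - lam) • Q₂) := by
  obtain ⟨hl0, hl1⟩ := hlam
  have hl1' : 0 ≤ 1 - lam := by linarith
  have hQm : RowStochastic (lam • Q₁ + (1 - lam) • Q₂) := by
    constructor
    · intro m k
      simp only [Pi.add_apply, Pi.smul_apply, smul_eq_mul]
      exact add_nonneg (mul_nonneg hl0 (hQ₁.1 m k)) (mul_nonneg hl1' (hQ₂.1 m k))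
    · intro m
      simp only [Pi.add_apply, Pi.smul_apply, smul_eq_mul]
      rw [Finset.sum_add_distrib, ← Finset.mul_sum, ← Finset.mul_sum, hQ₁.2 m, hQ₂.2 m]
      ring
  unfold J
  have hS : lam * ∑ h, impurity f (fun n => pXT p Q₁ A n h)
      + (1 - lam) * ∑ h, impurity f (fun n => pXT p Q₂ A n h)
      ≤ ∑ h, impurity f (fun n => pXT p (lam • Q₁ + (1 - lam) • Q₂) A n h) := by
    rw [Finset.mul_sum, Finset.mul_sum, ← Finset.sum_add_distrib]
    apply Finset.sum_le_sum
    intro h _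
    have heq : (fun n => pXT p (lam • Q₁ + (1 - lam) • Q₂) A n h)
        = fun n => lam * pXT p Q₁ A n h + (1 - lam) * pXT p Q₂ A n h := by
      funext n; exact pXT_lin p Q₁ Q₂ A lam n h
    rw [heq]
    exact aux_impurity f hf _ _
      (fun n => pXT_nonneg p hp.1 Q₁ hQ₁.1 A (fun k h' => (hApos k h').le) n h)
      (fun n => pXT_nonneg p hp.1 Q₂ hQ₂.1 A (fun k h' => (hApos k h').le) n h)
      (sum_pXT_pos p hp Q₁ hQ₁ A hApos h)
      (sum_pXT_pos p hp Q₂ hQ₂ A hApos h) lam hl0 hl1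
  have hG : lam * ∑ k, g k (pZ p Q₁ k) + (1 - lam) * ∑ k, g k (pZ p Q₂ k)
      ≤ ∑ k, g k (pZ p (lam • Q₁ + (1 - lam) • Q₂) k) := by
    rw [Finset.mul_sum, Finset.mul_sum, ← Finset.sum_add_distrib]
    apply Finset.sum_le_sum
    intro k _
    rw [pZ_lin]
    have := (hg k).2 (Set.mem_univ (pZ p Q₁ k)) (Set.mem_univ (pZ p Q₂ k)) hl0 hl1'
      (by ring : lam + (1 - lam) = 1)
    simpa [smul_eq_mul] using this
  nlinarith [mul_le_mul_of_nonneg_left hS hβ.le, hG]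
end

section
/- Equality case of the impurity gain for strictly concave impurity: assume additionally that f is strictly concave on the simplex, i.e., f(λ•a + (1−λ)•b) > λ·f(a) + (1−λ)·f(b) whenever a ≠ b in Δ_N and λ ∈ (0,1). If b, c : Fin N → ℝ are componentwise nonnegative with ∑ n, b n > 0 and ∑ n, c n > 0, then F(b + c) = F(b) + F(c) if and only if the normalized vectors coincide: (fun n => b n / ∑ m, b m) = (fun n => c n / ∑ m, c m); otherwise F(b + c) > F(b) + F(c). -/
/-!
Write `S = ∑ b`, `T = ∑ c`, `p = b / S`, `q = c / T` and `λ = S / (S + T)`. Then the normalization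
of `b + c` is the convex combination `λ p + (1 - λ) q`, so
`F(b + c) - F(b) - F(c) = (S + T) (f(λ p + (1 - λ) q) - λ f(p) - (1 - λ) f(q))`,
which by strict concavity is positive unless `p = q`, and vanishes when `p = q`.
-/

namespace impurity

variable {N : ℕ}

noncomputable def normalize (v : Fin N → ℝ) : Fin N → ℝ := fun n => v n / ∑ m, v m

theorem normalize_mem_simplex {v : Fin N → ℝ} (hv : ∀ n, 0 ≤ v n) (hvs : 0 < ∑ n, v n) :
    normalize v ∈ simplex N :=
  ⟨fun n => div_nonneg (hv n) hvs.le, (Finset.sum_div ..).symm.trans (div_self hvs.ne')⟩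

variable {b c : Fin N → ℝ}

theorem normalize_add (hbs : ∑ n, b n ≠ 0) (hcs : ∑ n, c n ≠ 0)
    (hbcs : ∑ n, b n + ∑ n, c n ≠ 0) :
    normalize (b + c) =
      ((∑ n, b n) / (∑ n, b n + ∑ n, c n)) • normalize b +
        (1 - (∑ n, b n) / (∑ n, b n + ∑ n, c n)) • normalize c := by
  funext n
  simp only [normalize, Pi.add_apply, Pi.smul_apply, smul_eq_mul, Finset.sum_add_distrib]
  field_simp
  ring

theorem add_sub_add_eq (f : (Fin N → ℝ) → ℝ) (hbs : ∑ n, b n ≠ 0) (hcs : ∑ n, c n ≠ 0)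
    (hbcs : ∑ n, b n + ∑ n, c n ≠ 0) :
    let lam := (∑ n, b n) / (∑ n, b n + ∑ n, c n)
    impurity f (b + c) - (impurity f b + impurity f c) =
      (∑ n, b n + ∑ n, c n) *
        (f (lam • normalize b + (1 - lam) • normalize c) -
          (lam * f (normalize b) + (1 - lam) * f (normalize c))) := by
  intro lam
  have hbc : impurity f (b + c) =
      (∑ n, b n + ∑ n, c n) * f (lam • normalize b + (1 - lam) • normalize c) := by
    rw [← normalize_add hbs hcs hbcs, impurity, ← Finset.sum_add_distrib]
    rfl
  change _ - ((∑ n, b n) * f (normalize b) + (∑ n, c n) * f (normalize c)) = _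
  rw [hbc]
  generalize f (lam • normalize b + (1 - lam) • normalize c) = x
  simp only [lam]
  field_simp
  ring

end impurity

open impurity in
theorem stmt_16_general {N : ℕ} (f : (Fin N → ℝ) → ℝ)
    (hfs : ∀ a ∈ simplex N, ∀ b ∈ simplex N, a ≠ b → ∀ lam ∈ Set.Ioo (0:ℝ) 1,
      lam * f a + (1 - lam) * f b < f (lam • a + (1 - lam) • b))
    (b c : Fin N → ℝ) (hb : ∀ n, 0 ≤ b n) (hc : ∀ n, 0 ≤ c n)
    (hbs : 0 < ∑ n, b n) (hcs : 0 < ∑ n, c n) :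
    (impurity f (b + c) = impurity f b + impurity f c ↔
      (fun n => b n / ∑ m, b m) = (fun n => c n / ∑ m, c m)) ∧
    ((fun n => b n / ∑ m, b m) ≠ (fun n => c n / ∑ m, c m) →
      impurity f b + impurity f c < impurity f (b + c)) := by
  have hST : 0 < ∑ n, b n + ∑ n, c n := add_pos hbs hcs
  have hgap := add_sub_add_eq f hbs.ne' hcs.ne' hST.ne'
  set lam := (∑ n, b n) / (∑ n, b n + ∑ n, c n)
  have hlam : lam ∈ Set.Ioo (0 : ℝ) 1 :=
    ⟨div_pos hbs hST, (div_lt_one hST).2 (lt_add_of_pos_right _ hcs)⟩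
  have strict (hne : normalize b ≠ normalize c) :
      impurity f b + impurity f c < impurity f (b + c) := by
    have hlt := hfs _ (normalize_mem_simplex hb hbs) _ (normalize_mem_simplex hc hcs) hne lam hlam
    linarith [mul_pos hST (sub_pos.2 hlt)]
  refine ⟨⟨fun heq => by_contra fun hne => (strict hne).ne' heq, fun hpq => ?_⟩, strict⟩
  rw [← sub_eq_zero, hgap, show normalize b = normalize c from hpq, ← add_smul, add_sub_cancel,
    one_smul]
  ring

/-- Equality case of the impurity gain for strictly concave impurity. -/
theorem stmt_16 {N : ℕ} (hN : 1 ≤ N) (f : (Fin N → ℝ) → ℝ) (hf : ConcaveOnSimplex f)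
    (hfs : ∀ a ∈ simplex N, ∀ b ∈ simplex N, a ≠ b → ∀ lam ∈ Set.Ioo (0:ℝ) 1,
      lam * f a + (1 - lam) * f b < f (lam • a + (1 - lam) • b))
    (b c : Fin N → ℝ) (hb : ∀ n, 0 ≤ b n) (hc : ∀ n, 0 ≤ c n)
    (hbs : 0 < ∑ n, b n) (hcs : 0 < ∑ n, c n) :
    (impurity f (b + c) = impurity f b + impurity f c ↔
      (fun n => b n / ∑ m, b m) = (fun n => c n / ∑ m, c m)) ∧
    ((fun n => b n / ∑ m, b m) ≠ (fun n => c n / ∑ m, c m) →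
      impurity f b + impurity f c < impurity f (b + c)) :=
  stmt_16_general f hfs b c hb hc hbs hcs
end
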